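/- arXiv:1908.08407 — 3 statements merged into one kernel-verified Lean document; each statement's English description precedes it below -/
import Mathlib

section
/- Let W1, …, Wt be mutually independent discrete random variables and M any discrete random variable jointly distributed with them. Then the conditional total correlation (∑_{i=1}^t H(W_i|M)) − H(W_1,…,W_t|M) is at most H(M). -/
/-!
Conditioning does not increase entropy, so `∑ H(Wᵢ|M) ≤ ∑ H(Wᵢ)`, and by independence
`∑ H(Wᵢ) = H(W₁,…,W_t)`. Finally `H(W₁,…,W_t) ≤ H(W₁,…,W_t,M) = H(W₁,…,W_t|M) + H(M)`.
-/

open Finset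

def IsPMF {Ω : Type*} [Fintype Ω] (p : Ω → ℝ) : Prop :=
  (∀ ω, 0 ≤ p ω) ∧ ∑ ω, p ω = 1

noncomputable def pr {Ω : Type*} [Fintype Ω] {α : Type*} [Fintype α] [DecidableEq α]
    (p : Ω → ℝ) (X : Ω → α) (x : α) : ℝ :=
  ∑ ω ∈ Finset.univ.filter (fun ω => X ω = x), p ω

/-- Shannon entropy (base 2) of the random variable `X` under `p`. -/
noncomputable def ent {Ω : Type*} [Fintype Ω] {α : Type*} [Fintype α] [DecidableEq α]
    (p : Ω → ℝ) (X : Ω → α) : ℝ :=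
  -∑ x, pr p X x * Real.logb 2 (pr p X x)

/-- Conditional entropy H(X | U). -/
noncomputable def centH {Ω : Type*} [Fintype Ω] {α β : Type*} [Fintype α] [DecidableEq α]
    [Fintype β] [DecidableEq β] (p : Ω → ℝ) (X : Ω → α) (U : Ω → β) : ℝ :=
  ent p (fun ω => (X ω, U ω)) - ent p U

/-- Mutual information I(X;Y). -/
noncomputable def mi {Ω : Type*} [Fintype Ω] {α β : Type*} [Fintype α] [DecidableEq α]
    [Fintype β] [DecidableEq β] (p : Ω → ℝ) (X : Ω → α) (Y : Ω → β) : ℝ :=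
  ent p X + ent p Y - ent p (fun ω => (X ω, Y ω))

/-- Conditional mutual information I(X;Y|U). -/
noncomputable def cmi {Ω : Type*} [Fintype Ω] {α β γ : Type*} [Fintype α] [DecidableEq α]
    [Fintype β] [DecidableEq β] [Fintype γ] [DecidableEq γ]
    (p : Ω → ℝ) (X : Ω → α) (Y : Ω → β) (U : Ω → γ) : ℝ :=
  centH p X U + centH p Y U - centH p (fun ω => (X ω, Y ω)) U

def IndepRV {Ω : Type*} [Fintype Ω] {α β : Type*} [Fintype α] [DecidableEq α]
    [Fintype β] [DecidableEq β] (p : Ω → ℝ) (X : Ω → α) (Y : Ω → β) : Prop :=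
  ∀ x y, pr p (fun ω => (X ω, Y ω)) (x, y) = pr p X x * pr p Y y

/-- Mutual independence of the family `W`. -/
def MutIndep {Ω : Type*} [Fintype Ω] {t : ℕ} {β : Type*} [Fintype β] [DecidableEq β]
    (p : Ω → ℝ) (W : Fin t → Ω → β) : Prop :=
  ∀ w : Fin t → β, pr p (fun ω => fun i => W i ω) w = ∏ i, pr p (W i) (w i)

section Probabilities

variable {Ω α β : Type*} [Fintype Ω] [Fintype α] [DecidableEq α] [Fintype β] [DecidableEq β]

lemma pr_nonneg {p : Ω → ℝ} (hp : ∀ ω, 0 ≤ p ω) (X : Ω → α) (a : α) : 0 ≤ pr p X a :=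
  sum_nonneg fun ω _ => hp ω

lemma sum_pr_mul (p : Ω → ℝ) (X : Ω → α) (h : α → ℝ) :
    ∑ a, pr p X a * h a = ∑ ω, p ω * h (X ω) := by
  simp only [pr, sum_mul]
  rw [← sum_fiberwise univ X fun ω => p ω * h (X ω)]
  refine sum_congr rfl fun a _ => sum_congr rfl fun ω hω => ?_
  rw [(mem_filter.mp hω).2]

lemma sum_pr (p : Ω → ℝ) (X : Ω → α) : ∑ a, pr p X a = ∑ ω, p ω := by
  simpa using sum_pr_mul p X 1

lemma sum_pr_mul_comp (p : Ω → ℝ) (X : Ω → α) (g : α → β) (h : β → ℝ) :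
    ∑ a, pr p X a * h (g a) = ∑ b, pr p (fun ω => g (X ω)) b * h b := by
  rw [sum_pr_mul, sum_pr_mul]

lemma pr_le_pr_comp {p : Ω → ℝ} (hp : ∀ ω, 0 ≤ p ω) (X : Ω → α) (g : α → β) (a : α) :
    pr p X a ≤ pr p (fun ω => g (X ω)) (g a) :=
  sum_le_sum_of_subset_of_nonneg (fun ω hω => by simp_all) fun ω _ _ => hp ω

end Probabilities

lemma mul_log_le_mul_log_add_sub {q r : ℝ} (hq : 0 ≤ q) (hr : 0 ≤ r) (hqr : q ≠ 0 → r ≠ 0) :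
    q * Real.log r ≤ q * Real.log q + (r - q) := by
  rcases hq.eq_or_lt with rfl | hq
  · simpa using hr
  have hr : 0 < r := hr.lt_of_ne (hqr hq.ne').symm
  have hlog : Real.log (r / q) ≤ r / q - 1 := Real.log_le_sub_one_of_pos (div_pos hr hq)
  rw [Real.log_div hr.ne' hq.ne'] at hlog
  have : q * (Real.log r - Real.log q) ≤ q * (r / q - 1) := by gcongr
  rw [mul_sub, mul_sub, mul_div_cancel₀ _ hq.ne'] at this
  linarith

lemma sum_mul_logb_le_sum_mul_logb {ι : Type*} [Fintype ι] {b : ℝ} (hb : 1 < b)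
    {q r : ι → ℝ} (hq : ∀ i, 0 ≤ q i) (hr : ∀ i, 0 ≤ r i) (hqr : ∀ i, q i ≠ 0 → r i ≠ 0)
    (hsum : ∑ i, r i ≤ ∑ i, q i) :
    ∑ i, q i * Real.logb b (r i) ≤ ∑ i, q i * Real.logb b (q i) := by
  have hlog : ∑ i, q i * Real.log (r i) ≤ ∑ i, q i * Real.log (q i) := by
    have := sum_le_sum fun i (_ : i ∈ univ) => mul_log_le_mul_log_add_sub (hq i) (hr i) (hqr i)
    rw [sum_add_distrib, sum_sub_distrib] at this
    linarith
  simp only [Real.logb, ← mul_div_assoc, ← sum_div]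
  exact div_le_div_of_nonneg_right hlog (Real.log_pos hb).le

lemma mul_logb_prod {ι : Type*} (b : ℝ) (s : Finset ι) (x : ι → ℝ) :
    (∏ i ∈ s, x i) * Real.logb b (∏ i ∈ s, x i) = ∑ i ∈ s, (∏ i ∈ s, x i) * Real.logb b (x i) := by
  by_cases hx : ∃ i ∈ s, x i = 0
  · obtain ⟨i, hi, hxi⟩ := hx
    simp [prod_eq_zero hi hxi]
  · rw [Real.logb_prod s x fun i hi hxi => hx ⟨i, hi, hxi⟩, mul_sum]

section ProductDistribution

variable {ι β : Type*} [Fintype ι] [DecidableEq ι] [Fintype β]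

lemma sum_prod_mul_apply (q : ι → β → ℝ) (j : ι) (hq : ∀ i ≠ j, ∑ x, q i x = 1) (f : β → ℝ) :
    ∑ w : ι → β, (∏ i, q i (w i)) * f (w j) = ∑ x, q j x * f x := by
  have hfactor (w : ι → β) : (∏ i, q i (w i)) * f (w j) =
      ∏ i, q i (w i) * (if i = j then f (w i) else 1) := by
    rw [prod_mul_distrib, Fintype.prod_ite_eq']
  rw [sum_congr rfl fun w _ => hfactor w,
    ← Fintype.prod_sum fun i x => q i x * if i = j then f x else 1,
    prod_eq_single j (fun i _ hij => by simp [hij, hq i hij]) (by simp)]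
  simp

lemma sum_prod_mul_logb_prod (b : ℝ) (q : ι → β → ℝ) (hq : ∀ i, ∑ x, q i x = 1) :
    ∑ w : ι → β, (∏ i, q i (w i)) * Real.logb b (∏ i, q i (w i)) =
      ∑ i, ∑ x, q i x * Real.logb b (q i x) := by
  simp_rw [mul_logb_prod]
  rw [sum_comm]
  exact sum_congr rfl fun j _ =>
    sum_prod_mul_apply q j (fun i _ => hq i) fun x => Real.logb b (q j x)

end ProductDistribution

section Entropy

variable {Ω α β : Type*} [Fintype Ω] [Fintype α] [DecidableEq α] [Fintype β] [DecidableEq β]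
  {p : Ω → ℝ}

lemma ent_le_ent_pair (hp : ∀ ω, 0 ≤ p ω) (X : Ω → α) (Y : Ω → β) :
    ent p X ≤ ent p (fun ω => (X ω, Y ω)) := by
  set q := pr p (fun ω => (X ω, Y ω))
  have hmarg : ∑ x, pr p X x * Real.logb 2 (pr p X x) =
      ∑ z, q z * Real.logb 2 (pr p X z.1) :=
    (sum_pr_mul_comp p (fun ω => (X ω, Y ω)) Prod.fst fun x => Real.logb 2 (pr p X x)).symm
  rw [ent, ent, hmarg, neg_le_neg_iff]
  refine sum_le_sum fun z _ => ?_
  rcases (pr_nonneg hp (fun ω => (X ω, Y ω)) z).eq_or_lt with hz | hz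
  · simp [q, ← hz]
  · exact mul_le_mul_of_nonneg_left
      (Real.logb_le_logb_of_le one_lt_two hz (pr_le_pr_comp hp _ Prod.fst z)) hz.le

lemma ent_pair_le_add (hp : IsPMF p) (X : Ω → α) (Y : Ω → β) :
    ent p (fun ω => (X ω, Y ω)) ≤ ent p X + ent p Y := by
  set q := pr p (fun ω => (X ω, Y ω))
  have hq (z : α × β) : 0 ≤ q z := pr_nonneg hp.1 _ z
  have hsupp (z : α × β) (hz : q z ≠ 0) : pr p X z.1 ≠ 0 ∧ pr p Y z.2 ≠ 0 :=
    ⟨((hq z).lt_of_ne' hz |>.trans_le (pr_le_pr_comp hp.1 _ Prod.fst z)).ne',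
      ((hq z).lt_of_ne' hz |>.trans_le (pr_le_pr_comp hp.1 _ Prod.snd z)).ne'⟩
  have hsum : ∑ z : α × β, pr p X z.1 * pr p Y z.2 ≤ ∑ z, q z := by
    rw [Fintype.sum_prod_type, ← sum_mul_sum, sum_pr, sum_pr, sum_pr, hp.2, one_mul]
  have hgibbs := sum_mul_logb_le_sum_mul_logb one_lt_two hq
    (fun z => mul_nonneg (pr_nonneg hp.1 X z.1) (pr_nonneg hp.1 Y z.2))
    (fun z hz => mul_ne_zero (hsupp z hz).1 (hsupp z hz).2) hsum
  have hsplit : ∑ z, q z * Real.logb 2 (pr p X z.1 * pr p Y z.2) =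
      ∑ z, q z * Real.logb 2 (pr p X z.1) + ∑ z, q z * Real.logb 2 (pr p Y z.2) := by
    rw [← sum_add_distrib]
    refine sum_congr rfl fun z _ => ?_
    by_cases hz : q z = 0
    · simp [hz]
    · rw [Real.logb_mul (hsupp z hz).1 (hsupp z hz).2, mul_add]
  rw [hsplit, sum_pr_mul_comp p _ Prod.fst fun x => Real.logb 2 (pr p X x),
    sum_pr_mul_comp p _ Prod.snd fun y => Real.logb 2 (pr p Y y)] at hgibbs
  simp only [ent]
  linarith

lemma centH_le_ent (hp : IsPMF p) (X : Ω → α) (U : Ω → β) : centH p X U ≤ ent p X := by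
  rw [centH]
  linarith [ent_pair_le_add hp X U]

lemma ent_le_centH_add_ent (hp : ∀ ω, 0 ≤ p ω) (X : Ω → α) (U : Ω → β) :
    ent p X ≤ centH p X U + ent p U := by
  rw [centH]
  linarith [ent_le_ent_pair hp X U]

lemma ent_eq_sum_of_mutIndep {t : ℕ} (hp : IsPMF p) (W : Fin t → Ω → β)
    (hInd : MutIndep p W) : ent p (fun ω i => W i ω) = ∑ i, ent p (W i) := by
  have hlaw : pr p (fun ω i => W i ω) = fun w => ∏ i, pr p (W i) (w i) := funext hInd
  simp only [ent, hlaw, sum_prod_mul_logb_prod 2 _ fun i => (sum_pr p (W i)).trans hp.2,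
    sum_neg_distrib]

end Entropy

/-- If `W₁,…,W_t` are mutually independent, then
`∑ᵢ H(Wᵢ|M) − H(W₁,…,W_t|M) ≤ H(M)`. -/
theorem stmt3 {Ω β γ : Type*} [Fintype Ω] [Fintype β] [DecidableEq β]
    [Fintype γ] [DecidableEq γ] {t : ℕ}
    (p : Ω → ℝ) (hp : IsPMF p) (W : Fin t → Ω → β) (M : Ω → γ)
    (hInd : MutIndep p W) :
    (∑ i, centH p (W i) M) - centH p (fun ω => fun i => W i ω) M ≤ ent p M := by
  calc (∑ i, centH p (W i) M) - centH p (fun ω => fun i => W i ω) M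
      ≤ (∑ i, ent p (W i)) - centH p (fun ω => fun i => W i ω) M := by
        gcongr with i
        exact centH_le_ent hp (W i) M
    _ = ent p (fun ω i => W i ω) - centH p (fun ω => fun i => W i ω) M := by
        rw [ent_eq_sum_of_mutIndep hp W hInd]
    _ ≤ ent p M := by
        linarith [ent_le_centH_add_ent hp.1 (fun ω i => W i ω) M]
end

section
/- Fix H ≥ 0 and t ≥ 1. Define region A as the set of nonnegative tuples (R,R_1,…,R_t) for which there exist nonnegative reals r, r_1,…,r_t with: R ≥ (∑_{j≠i} r_j) + r for all i ∈ [1:t], H ≤ r + ∑_{j=1}^t r_j, and R_j ≥ r_j for all j. Define region B as the set of nonnegative tuples satisfying R + min{R_1,…,R_t} ≥ H and R ≥ (t−1)H/t. Then A = B. -/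
open Finset

/-!
Region A projects onto region B by Fourier–Motzkin elimination of the auxiliary rates.
Necessity: the constraint for the index `i` minimising `R_i`, combined with `H ≤ r + ∑ r_j` and
`r_i ≤ R_i`, gives `H ≤ R + min R_j`; summing the `t` constraints and using `r ≥ 0` gives
`(t - 1) H ≤ t R`. Sufficiency: take all `r_j` equal to `c = min(min R_j, H/t)` and `r = H - t c`,
so that every constraint reduces to `H - c ≤ R`.
-/

theorem sum_sum_erase_add_sum {ι M : Type*} [Fintype ι] [DecidableEq ι] [AddCommMonoid M]
    (f : ι → M) : ∑ i, ∑ j ∈ univ.erase i, f j + ∑ i, f i = Fintype.card ι • ∑ j, f j := by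
  rw [← sum_add_distrib, ← card_univ, ← sum_const]
  exact sum_congr rfl fun i _ => sum_erase_add _ _ (mem_univ i)

section RateRegion

variable {ι : Type*} [Fintype ι] [DecidableEq ι] {H R r : ℝ} {R' r' : ι → ℝ}

theorem le_add_of_sum_erase_add_le {i : ι} (hRi : ∑ j ∈ univ.erase i, r' j + r ≤ R)
    (hH : H ≤ r + ∑ j, r' j) (hri : r' i ≤ R' i) : H ≤ R + R' i := by
  have := sum_erase_add univ r' (mem_univ i)
  linarith

theorem card_sub_one_mul_div_card_le [Nonempty ι] (hr : 0 ≤ r)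
    (hR : ∀ i, ∑ j ∈ univ.erase i, r' j + r ≤ R) (hH : H ≤ r + ∑ j, r' j) :
    ((Fintype.card ι : ℝ) - 1) * H / Fintype.card ι ≤ R := by
  have hn : (1 : ℝ) ≤ Fintype.card ι := by exact_mod_cast Fintype.card_pos
  have hsum : ∑ i, (∑ j ∈ univ.erase i, r' j + r) ≤ ∑ _i : ι, R := sum_le_sum fun i _ => hR i
  rw [sum_add_distrib, sum_const, sum_const, card_univ, nsmul_eq_mul, nsmul_eq_mul] at hsum
  have hdouble := sum_sum_erase_add_sum r'
  rw [nsmul_eq_mul] at hdouble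
  generalize (Fintype.card ι : ℝ) = n at *
  rw [div_le_iff₀ (by linarith)]
  calc (n - 1) * H ≤ (n - 1) * (r + ∑ j, r' j) := mul_le_mul_of_nonneg_left hH (by linarith)
    _ ≤ R * n := by linarith

theorem exists_rates_of_le_add_of_card_sub_one_mul_div_card_le [Nonempty ι] {m : ℝ}
    (hH : 0 ≤ H) (hm : 0 ≤ m) (hmR' : ∀ i, m ≤ R' i) (hHm : H ≤ R + m)
    (hHR : ((Fintype.card ι : ℝ) - 1) * H / Fintype.card ι ≤ R) :
    ∃ r : ℝ, ∃ r' : ι → ℝ, 0 ≤ r ∧ (∀ j, 0 ≤ r' j) ∧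
      (∀ i, ∑ j ∈ univ.erase i, r' j + r ≤ R) ∧ H ≤ r + ∑ j, r' j ∧ ∀ j, r' j ≤ R' j := by
  have hn : (0 : ℝ) < Fintype.card ι := by exact_mod_cast Fintype.card_pos
  have hcard (i : ι) : ((univ.erase i).card : ℝ) = Fintype.card ι - 1 := by
    rw [card_erase_of_mem (mem_univ i), card_univ, Nat.cast_pred Fintype.card_pos]
  suffices ∃ r c : ℝ, 0 ≤ r ∧ 0 ≤ c ∧ ((Fintype.card ι : ℝ) - 1) * c + r ≤ R ∧
      H ≤ r + Fintype.card ι * c ∧ c ≤ m by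
    obtain ⟨r, c, hr, hc, hcR, hHc, hcm⟩ := this
    refine ⟨r, fun _ => c, hr, fun _ => hc, fun i => ?_, ?_, fun j => hcm.trans (hmR' j)⟩
    · rwa [sum_const, nsmul_eq_mul, hcard]
    · rwa [sum_const, nsmul_eq_mul, card_univ]
  generalize (Fintype.card ι : ℝ) = n at *
  set c := min m (H / n)
  have hnc : n * c ≤ H :=
    calc n * c ≤ n * (H / n) := mul_le_mul_of_nonneg_left (min_le_right _ _) hn.le
      _ = H := mul_div_cancel₀ _ hn.ne'
  have hHc : H - c ≤ R := by
    obtain hc | hc : c = m ∨ c = H / n := min_choice m (H / n)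
    · rw [hc]
      linarith
    · have : (n - 1) * H / n = H - H / n := by field_simp
      rw [hc]
      linarith
  exact ⟨H - n * c, c, by linarith, le_min hm (by positivity), by linarith, by linarith,
    min_le_left _ _⟩

end RateRegion

theorem stmt7_general (t : ℕ) (ht : 1 ≤ t) (H : ℝ) (hH : 0 ≤ H)
    (R : ℝ) (R' : Fin t → ℝ) (hR' : ∀ i, 0 ≤ R' i) :
    (∃ r : ℝ, ∃ r' : Fin t → ℝ, 0 ≤ r ∧ (∀ j, 0 ≤ r' j) ∧
        (∀ i : Fin t, (∑ j ∈ Finset.univ.erase i, r' j) + r ≤ R) ∧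
        H ≤ r + ∑ j, r' j ∧ (∀ j, r' j ≤ R' j))
    ↔ (H ≤ R + Finset.univ.inf' ⟨⟨0, ht⟩, Finset.mem_univ _⟩ R'
        ∧ ((t : ℝ) - 1) * H / t ≤ R) := by
  have : Nonempty (Fin t) := ⟨⟨0, ht⟩⟩
  constructor
  · rintro ⟨r, r', hr, -, hR, hHr, hr'⟩
    obtain ⟨i, -, hi⟩ := exists_mem_eq_inf' ⟨⟨0, ht⟩, mem_univ _⟩ R'
    exact ⟨hi ▸ le_add_of_sum_erase_add_le (hR i) hHr (hr' i),
      by simpa using card_sub_one_mul_div_card_le hr hR hHr⟩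
  · rintro ⟨hm, hHR⟩
    exact exists_rates_of_le_add_of_card_sub_one_mul_div_card_le hH
      (le_inf' _ _ fun i _ => hR' i) (fun i => inf'_le _ (mem_univ i)) hm (by simpa using hHR)

/-- Fourier–Motzkin elimination for the individually-shared-randomness region with
equal outputs: region A (with auxiliary rates `r, r₁,…,r_t`) equals region B
(given by `R + min{R₁,…,R_t} ≥ H` and `R ≥ (t−1)H/t`). -/
theorem stmt7 (t : ℕ) (ht : 1 ≤ t) (H : ℝ) (hH : 0 ≤ H)
    (R : ℝ) (R' : Fin t → ℝ) (hR : 0 ≤ R) (hR' : ∀ i, 0 ≤ R' i) :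
    (∃ r : ℝ, ∃ r' : Fin t → ℝ, 0 ≤ r ∧ (∀ j, 0 ≤ r' j) ∧
        (∀ i : Fin t, (∑ j ∈ Finset.univ.erase i, r' j) + r ≤ R) ∧
        H ≤ r + ∑ j, r' j ∧ (∀ j, r' j ≤ R' j))
    ↔ (H ≤ R + Finset.univ.inf' ⟨⟨0, ht⟩, Finset.mem_univ _⟩ R'
        ∧ ((t : ℝ) - 1) * H / t ≤ R) :=
  stmt7_general t ht H hH R R' hR'
end

section
/- Fix H ≥ 0 and t ≥ 1. Define region A as the set of nonnegative tuples (R,R_1,…,R_t) for which there exist nonnegative reals r, r_1,…,r_t with: R ≥ r_i + r for all i ∈ [1:t], H ≤ r + ∑_{j=1}^t r_j, and R_j ≥ r_j for all j. Define region B as the set of nonnegative tuples satisfying, for every i ∈ [1:t] and every subset S ⊊ [1:t] with |S| = t−i, the inequality i·R + ∑_{j∈S} R_j ≥ H. Then A = B. -/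
/-!
For admissible auxiliary rates and any `S ⊊ [1:t]`, bound `r'_j ≤ R'_j` on `S` and `r'_j ≤ R - r`
on the `i ≥ 1` indices outside `S`; since `r ≥ 0` this gives `r + ∑ r'_j ≤ i R + ∑_{j∈S} R'_j`.
Conversely one of these bounds is attained: if some `R'_j` exceeds `R`, take `r = 0` and
`r'_j = min (R'_j, R)`; otherwise take `r'_j = R'_j` and `r = R - max_j R'_j`.
-/

open Finset

namespace RateRegion

variable {ι : Type*} [Fintype ι] [DecidableEq ι] {R r : ℝ} {R' r' : ι → ℝ}

def IsAdmissible (R : ℝ) (R' : ι → ℝ) (r : ℝ) (r' : ι → ℝ) : Prop :=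
  0 ≤ r ∧ (∀ j, 0 ≤ r' j) ∧ (∀ j, r' j + r ≤ R) ∧ ∀ j, r' j ≤ R' j

theorem card_compl_pos_of_ssubset_univ {S : Finset ι} (hS : S ⊂ univ) : 0 < #Sᶜ := by
  have := card_lt_card hS
  rw [card_univ] at this
  rw [card_compl]
  omega

theorem IsAdmissible.add_sum_le (h : IsAdmissible R R' r r') {S : Finset ι} (hS : S ⊂ univ) :
    r + ∑ j, r' j ≤ #Sᶜ * R + ∑ j ∈ S, R' j := by
  obtain ⟨hr, -, hrR, hrR'⟩ := h
  have hcard : (1 : ℝ) ≤ #Sᶜ := by exact_mod_cast card_compl_pos_of_ssubset_univ hS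
  have hS_le : ∑ j ∈ S, r' j ≤ ∑ j ∈ S, R' j := sum_le_sum fun j _ => hrR' j
  have hSc_le : ∑ j ∈ Sᶜ, r' j ≤ #Sᶜ * (R - r) := by
    rw [← nsmul_eq_mul, ← sum_const]
    exact sum_le_sum fun j _ => by linarith [hrR j]
  have hr_le : r ≤ #Sᶜ * r := by simpa using mul_le_mul_of_nonneg_right hcard hr
  rw [← sum_add_sum_compl S r']
  linarith

theorem exists_isAdmissible_of_forall_le [Nonempty ι] (hR' : ∀ j, 0 ≤ R' j)
    (hle : ∀ j, R' j ≤ R) :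
    ∃ r r', IsAdmissible R R' r r' ∧ ∃ S ⊂ univ, r + ∑ j, r' j = #Sᶜ * R + ∑ j ∈ S, R' j := by
  obtain ⟨j₀, -, hj₀⟩ := exists_max_image univ R' univ_nonempty
  refine ⟨R - R' j₀, R', ⟨by linarith [hle j₀], hR', fun j => ?_, fun _ => le_rfl⟩,
    univ.erase j₀, erase_ssubset (mem_univ j₀), ?_⟩
  · linarith [hj₀ j (mem_univ j)]
  · rw [compl_erase, compl_univ, insert_empty, card_singleton, sum_erase_eq_sub (mem_univ j₀)]
    push_cast
    ring

theorem exists_isAdmissible_of_lt (hR : 0 ≤ R) (hR' : ∀ j, 0 ≤ R' j) {j₁ : ι} (hj₁ : R < R' j₁) :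
    ∃ r r', IsAdmissible R R' r r' ∧ ∃ S ⊂ univ, r + ∑ j, r' j = #Sᶜ * R + ∑ j ∈ S, R' j := by
  refine ⟨0, fun j => min (R' j) R, ⟨le_rfl, fun j => le_min (hR' j) hR,
    fun j => by simp, fun j => min_le_left _ _⟩, univ.filter (fun j => R' j ≤ R), ?_, ?_⟩
  · exact ssubset_univ_iff.2 fun h => hj₁.not_ge (by simpa using h.ge (mem_univ j₁))
  · rw [zero_add, ← sum_add_sum_compl (univ.filter fun j => R' j ≤ R), add_comm, compl_filter,
      sum_congr rfl fun j hj => min_eq_right (not_le.1 (mem_filter.1 hj).2).le,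
      sum_congr rfl fun j hj => min_eq_left (mem_filter.1 hj).2, sum_const, nsmul_eq_mul]

theorem exists_isAdmissible [Nonempty ι] (hR : 0 ≤ R) (hR' : ∀ j, 0 ≤ R' j) :
    ∃ r r', IsAdmissible R R' r r' ∧ ∃ S ⊂ univ, r + ∑ j, r' j = #Sᶜ * R + ∑ j ∈ S, R' j := by
  by_cases hle : ∀ j, R' j ≤ R
  · exact exists_isAdmissible_of_forall_le hR' hle
  · obtain ⟨j₁, hj₁⟩ := not_forall.1 hle
    exact exists_isAdmissible_of_lt hR hR' (not_le.1 hj₁)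

end RateRegion

open RateRegion in
theorem stmt8_general (t : ℕ) (ht : 1 ≤ t) (H : ℝ)
    (R : ℝ) (R' : Fin t → ℝ) (hR : 0 ≤ R) (hR' : ∀ i, 0 ≤ R' i) :
    (∃ r : ℝ, ∃ r' : Fin t → ℝ, 0 ≤ r ∧ (∀ j, 0 ≤ r' j) ∧
        (∀ i : Fin t, r' i + r ≤ R) ∧
        H ≤ r + ∑ j, r' j ∧ (∀ j, r' j ≤ R' j))
    ↔ (∀ i : ℕ, 1 ≤ i → i ≤ t → ∀ S : Finset (Fin t), S ⊂ Finset.univ →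
        S.card = t - i → H ≤ (i : ℝ) * R + ∑ j ∈ S, R' j) := by
  constructor
  · rintro ⟨r, r', hr, hr', hrR, hH, hrR'⟩ i - hit S hS hScard
    have hcard : #S + #Sᶜ = t := by rw [card_add_card_compl, Fintype.card_fin]
    have hi : #Sᶜ = i := by omega
    exact hi ▸ hH.trans (IsAdmissible.add_sum_le ⟨hr, hr', hrR, hrR'⟩ hS)
  · intro hB
    have : Nonempty (Fin t) := ⟨⟨0, ht⟩⟩
    obtain ⟨r, r', ⟨hr, hr', hrR, hrR'⟩, S, hS, hsum⟩ := exists_isAdmissible hR hR'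
    have hcard : #S + #Sᶜ = t := by rw [card_add_card_compl, Fintype.card_fin]
    have hH := hB #Sᶜ (card_compl_pos_of_ssubset_univ hS) (by omega) S hS (by omega)
    exact ⟨r, r', hr, hr', hrR, hsum ▸ hH, hrR'⟩

/-- Polyhedral equivalence for the randomness-on-the-forehead region with equal
outputs: region A (with auxiliary rates `r, r₁,…,r_t`) equals region B given by
`i·R + ∑_{j∈S} R_j ≥ H` for every `i ∈ [1:t]` and every `S ⊊ [1:t]` with `|S| = t−i`. -/
theorem stmt8 (t : ℕ) (ht : 1 ≤ t) (H : ℝ) (hH : 0 ≤ H)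
    (R : ℝ) (R' : Fin t → ℝ) (hR : 0 ≤ R) (hR' : ∀ i, 0 ≤ R' i) :
    (∃ r : ℝ, ∃ r' : Fin t → ℝ, 0 ≤ r ∧ (∀ j, 0 ≤ r' j) ∧
        (∀ i : Fin t, r' i + r ≤ R) ∧
        H ≤ r + ∑ j, r' j ∧ (∀ j, r' j ≤ R' j))
    ↔ (∀ i : ℕ, 1 ≤ i → i ≤ t → ∀ S : Finset (Fin t), S ⊂ Finset.univ →
        S.card = t - i → H ≤ (i : ℝ) * R + ∑ j ∈ S, R' j) :=
  stmt8_general t ht H R R' hR hR'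
end
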